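/- arXiv:1005.3818 — 2 statements merged into one kernel-verified Lean document; each statement's English description precedes it below -/
import Mathlib

section
/- The unit resource achievable region is exactly an intersection of three half-spaces: a vector (R,P,S) ∈ ℝ³ can be written as α·(0,-1,1) + β·(-1,1,-1) + γ·(1,-1,0) for some nonnegative reals α, β, γ if and only if R + P ≤ 0, P + S ≤ 0, and R + P + S ≤ 0. -/
/-! The three generators are linearly independent, so a rate triple determines its coefficients:
adding coordinates gives `α = -(R + P)`, `β = -(R + P + S)` and `γ = -(P + S)`, and the cone is
exactly where these three numbers are nonnegative. -/

theorem unit_resource_combination (α β γ : ℝ) :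
    α • (![0, -1, 1] : Fin 3 → ℝ) + β • ![-1, 1, -1] + γ • ![1, -1, 0] =
      ![γ - β, β - α - γ, α - β] := by
  simp only [Matrix.smul_cons, Matrix.smul_empty, smul_eq_mul, Matrix.add_cons,
    Matrix.empty_add_empty, Matrix.head_cons, Matrix.tail_cons, Matrix.vecCons_inj, and_true]
  refine ⟨?_, ?_, ?_⟩ <;> ring

theorem eq_unit_resource_combination_iff {R P S α β γ : ℝ} :
    (![R, P, S] : Fin 3 → ℝ) = α • ![0, -1, 1] + β • ![-1, 1, -1] + γ • ![1, -1, 0] ↔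
      α = -(R + P) ∧ β = -(R + P + S) ∧ γ = -(P + S) := by
  simp only [unit_resource_combination, Matrix.vecCons_inj, and_true]
  constructor
  · rintro ⟨hR, hP, hS⟩
    refine ⟨?_, ?_, ?_⟩ <;> linarith
  · rintro ⟨rfl, rfl, rfl⟩
    refine ⟨?_, ?_, ?_⟩ <;> ring

/-- The unit resource achievable region (the cone generated by the rate
triples of secret key distribution `(0,-1,1)`, the one-time pad `(-1,1,-1)`,
and private-to-public transmission `(1,-1,0)`) is exactly the intersection of
the three half-spaces `R + P ≤ 0`, `P + S ≤ 0`, `R + P + S ≤ 0`. -/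
theorem unit_resource_region_characterization (R P S : ℝ) :
    (∃ α β γ : ℝ, 0 ≤ α ∧ 0 ≤ β ∧ 0 ≤ γ ∧
      (![R, P, S] : Fin 3 → ℝ) =
        α • (![0, -1, 1] : Fin 3 → ℝ) + β • (![-1, 1, -1] : Fin 3 → ℝ) +
          γ • (![1, -1, 0] : Fin 3 → ℝ)) ↔
    (R + P ≤ 0 ∧ P + S ≤ 0 ∧ R + P + S ≤ 0) := by
  simp only [eq_unit_resource_combination_iff]
  constructor
  · rintro ⟨_, _, _, hα, hβ, hγ, rfl, rfl, rfl⟩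
    exact ⟨by linarith, by linarith, by linarith⟩
  · rintro ⟨hRP, hPS, hRPS⟩
    exact ⟨_, _, _, by linarith, by linarith, by linarith, rfl, rfl, rfl⟩
end

section
/- For any real numbers a, b, c, the translate of the unit resource cone by (a,b,c) is exactly an intersection of three half-spaces: a vector (R,P,S) ∈ ℝ³ can be written as (a,b,c) + α·(0,-1,1) + β·(-1,1,-1) + γ·(1,-1,0) for some nonnegative reals α, β, γ if and only if R + P ≤ a + b, P + S ≤ b + c, and R + P + S ≤ a + b + c. -/
/-! The generators `(0,-1,1)`, `(-1,1,-1)`, `(1,-1,0)` form a basis of the space, and the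
normals of the three half-spaces are, up to sign, its dual basis. Hence the coefficients of
`(R,P,S) - (a,b,c)` are uniquely determined and equal the three slacks
`a + b - (R + P)`, `a + b + c - (R + P + S)`, `b + c - (P + S)`; the point lies in the
translated cone exactly when these are nonnegative. -/

theorem eq_add_unitResource_combination_iff {K : Type*} [CommRing K] (a b c R P S α β γ : K) :
    (![R, P, S] : Fin 3 → K) =
        ![a, b, c] + α • ![0, -1, 1] + β • ![-1, 1, -1] + γ • ![1, -1, 0] ↔
      α = a + b - (R + P) ∧ β = a + b + c - (R + P + S) ∧ γ = b + c - (P + S) := by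
  simp only [Matrix.smul_cons, Matrix.smul_empty, Matrix.add_cons, Matrix.empty_add_empty,
    Matrix.head_cons, Matrix.tail_cons, smul_eq_mul, Matrix.vecCons_inj, and_true]
  constructor
  · rintro ⟨hR, hP, hS⟩
    exact ⟨by linear_combination hR + hP, by linear_combination hR + hP + hS,
      by linear_combination hP + hS⟩
  · rintro ⟨rfl, rfl, rfl⟩
    refine ⟨?_, ?_, ?_⟩ <;> ring

/-- For any translation vector `(a,b,c)`, the translate of the unit resource
cone by `(a,b,c)` is exactly the intersection of the three half-spaces
`R + P ≤ a + b`, `P + S ≤ b + c`, `R + P + S ≤ a + b + c`. -/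
theorem translated_unit_resource_region_characterization (a b c R P S : ℝ) :
    (∃ α β γ : ℝ, 0 ≤ α ∧ 0 ≤ β ∧ 0 ≤ γ ∧
      (![R, P, S] : Fin 3 → ℝ) =
        (![a, b, c] : Fin 3 → ℝ) + α • (![0, -1, 1] : Fin 3 → ℝ) +
          β • (![-1, 1, -1] : Fin 3 → ℝ) + γ • (![1, -1, 0] : Fin 3 → ℝ)) ↔
    (R + P ≤ a + b ∧ P + S ≤ b + c ∧ R + P + S ≤ a + b + c) := by
  simp_rw [eq_add_unitResource_combination_iff]
  constructor
  · rintro ⟨_, _, _, hα, hβ, hγ, rfl, rfl, rfl⟩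
    exact ⟨sub_nonneg.1 hα, sub_nonneg.1 hγ, sub_nonneg.1 hβ⟩
  · rintro ⟨hRP, hPS, hRPS⟩
    exact ⟨_, _, _, sub_nonneg.2 hRP, sub_nonneg.2 hRPS, sub_nonneg.2 hPS, rfl, rfl, rfl⟩
end
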